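/- arXiv:2101.03978 — 2 statements merged into one kernel-verified Lean document; each statement's English description precedes it below -/
import Mathlib

section
/- Let ε > 0 and set b = ⌈n^ε⌉. For every cycle C of π, let t be the largest integer r with |E_r ∩ C| > b (with t = 0 if |C| ≤ b). Then t < 1/ε. -/
attribute [local instance] Classical.propDecidable

variable {n : ℕ}

/-- The first element of `E` encountered strictly after `x` when following `π` along its cycle
(`x` itself if no element of `E` is reachable).  For `E = E_r` this is the map `π_r`. -/
noncomputable def nextIn (π : Equiv.Perm (Fin n)) (E : Finset (Fin n)) (x : Fin n) : Fin n :=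
  if h : ∃ k, 0 < k ∧ (⇑π)^[k] x ∈ E then (⇑π)^[Nat.find h] x else x

/-- `b`-fold iteration of `nextIn`; for `E = E_r` this is `π_r^b`. -/
noncomputable def stepB (π : Equiv.Perm (Fin n)) (b : ℕ) (E : Finset (Fin n)) (x : Fin n) :
    Fin n :=
  (nextIn π E)^[b] x

/-- `level π b r` is the set `E_{r+1}` (0-indexed): `level π b 0 = E_1 = [n]`, and `E_{r+1}`
consists of the elements `i` of `E_r` with `i < π_r^k(i)` for all `k ∈ {−b,…,b} \ {0}`. -/
noncomputable def level (π : Equiv.Perm (Fin n)) (b : ℕ) : ℕ → Finset (Fin n)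
  | 0 => Finset.univ
  | r + 1 =>
    (level π b r).filter fun i =>
      (∀ k ∈ Finset.Icc 1 b, i < (nextIn π (level π b r))^[k] i) ∧
      (∀ k ∈ Finset.Icc 1 b, i < (nextIn π⁻¹ (level π b r))^[k] i)

/-- The cycle of `π` containing `x`, as a finset. -/
def cycleOfF (π : Equiv.Perm (Fin n)) (x : Fin n) : Finset (Fin n) :=
  (Finset.range n).image fun k => (⇑π)^[k] x

/-!
Every element `i` of `E_{r+1} ∩ C` lies strictly below its `b` successors and its `b`
predecessors under `π_r`, and `π_r⁻¹` undoes `π_r` on `E_r`. Hence the windows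
`{i, π_r i, …, π_r^b i}` of such elements are pairwise disjoint subsets of `E_r ∩ C` of size
`b + 1`, so `(b + 1) |E_{r+1} ∩ C| ≤ |E_r ∩ C|` and `(b + 1)^(t-1) |E_t ∩ C| ≤ |C| ≤ n`.
If `|E_t ∩ C| > b ≥ n^ε`, then `n^(εt) ≤ b^t < (b + 1)^t ≤ n`, so `εt < 1`.
-/

open Function Set

open scoped Finset

theorem Set.LeftInvOn.iterate {α : Type*} {f g : α → α} {s : Set α} (hgf : LeftInvOn g f s)
    (hf : MapsTo f s s) (k : ℕ) : LeftInvOn g^[k] f^[k] s := by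
  induction k with
  | zero => exact leftInvOn_id s
  | succ k ih => rw [iterate_succ f, iterate_succ' g]; exact hgf.comp ih hf

section WindowMinima

variable {α : Type*} [Preorder α] {f g : α → α} {b : ℕ}

lemma eq_and_eq_of_iterate_eq_iterate {s : Set α} (hf : MapsTo f s s) (hgf : LeftInvOn g f s)
    {i i' : α} (hi : i ∈ s) (hi' : i' ∈ s)
    (hi_back : ∀ k ∈ Finset.Icc 1 b, i < g^[k] i) (hi'_fwd : ∀ k ∈ Finset.Icc 1 b, i' < f^[k] i')
    {k j : ℕ} (hkj : k ≤ j) (hjb : j ≤ b) (heq : f^[k] i = f^[j] i') : i = i' ∧ k = j := by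
  obtain ⟨d, rfl⟩ := Nat.exists_eq_add_of_le hkj
  have hdi' : f^[d] i' ∈ s := hf.iterate d hi'
  have hi_eq : i = f^[d] i' :=
    (hgf.iterate hf k).injOn hi hdi' (by rwa [iterate_add_apply] at heq)
  rcases Nat.eq_zero_or_pos d with rfl | hd
  · exact ⟨hi_eq, rfl⟩
  have hd_mem : d ∈ Finset.Icc 1 b := Finset.mem_Icc.mpr ⟨hd, by omega⟩
  have hi'_lt : i' < i := hi_eq ▸ hi'_fwd d hd_mem
  have hi_lt : i < i' := by
    simpa only [hi_eq, (hgf.iterate hf d) hi'] using hi_back d hd_mem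
  exact absurd hi_lt hi'_lt.asymm

lemma succ_mul_card_le_card_of_lt_iterate {S T : Finset α} (hf : MapsTo f T T)
    (hgf : LeftInvOn g f T) (hST : S ⊆ T)
    (hfwd : ∀ i ∈ S, ∀ k ∈ Finset.Icc 1 b, i < f^[k] i)
    (hback : ∀ i ∈ S, ∀ k ∈ Finset.Icc 1 b, i < g^[k] i) :
    (b + 1) * #S ≤ #T := by
  have hinj : InjOn (fun p : α × ℕ => f^[p.2] p.1) ↑(S ×ˢ Finset.range (b + 1)) := by
    rintro ⟨i, k⟩ hik ⟨i', j⟩ hij' heq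
    simp only [Finset.coe_product, mem_prod, Finset.mem_coe, Finset.mem_range] at hik hij' heq
    rcases le_total k j with hkj | hjk
    · obtain ⟨rfl, rfl⟩ := eq_and_eq_of_iterate_eq_iterate hf hgf (hST hik.1) (hST hij'.1)
        (hback i hik.1) (hfwd i' hij'.1) hkj (by omega) heq
      rfl
    · obtain ⟨rfl, rfl⟩ := eq_and_eq_of_iterate_eq_iterate hf hgf (hST hij'.1) (hST hik.1)
        (hback i' hij'.1) (hfwd i hik.1) hjk (by omega) heq.symm
      rfl
  have hmaps : MapsTo (fun p : α × ℕ => f^[p.2] p.1) ↑(S ×ˢ Finset.range (b + 1)) ↑T :=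
    fun p hp => hf.iterate p.2 (hST (Finset.mem_product.mp hp).1)
  simpa [Finset.card_product, mul_comm] using Finset.card_le_card_of_injOn _ hmaps hinj

end WindowMinima

theorem Equiv.Perm.minimalPeriod_pos {α : Type*} [Finite α] (π : Equiv.Perm α) (y : α) :
    0 < minimalPeriod π y :=
  minimalPeriod_pos_of_mem_periodicPts (π.injective.mem_periodicPts y)

theorem Equiv.Perm.inv_iterate_iterate_of_le {α : Type*} (π : Equiv.Perm α) (y : α) {m j : ℕ}
    (hj : j ≤ m) : (⇑π⁻¹)^[j] ((⇑π)^[m] y) = (⇑π)^[m - j] y := by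
  rw [iterate_eq_pow, iterate_eq_pow, iterate_eq_pow, inv_pow, inv_eq_iff_eq, ← mul_apply,
    ← pow_add, Nat.add_sub_cancel' hj]

section NextIn

variable {π : Equiv.Perm (Fin n)} {E : Finset (Fin n)} {y : Fin n}

lemma exists_nextIn_eq_iterate (π : Equiv.Perm (Fin n)) (E : Finset (Fin n)) (y : Fin n) :
    ∃ k, nextIn π E y = (⇑π)^[k] y := by
  unfold nextIn
  split_ifs
  exacts [⟨_, rfl⟩, ⟨0, rfl⟩]

lemma exists_pos_iterate_mem (hy : y ∈ E) : ∃ k, 0 < k ∧ (⇑π)^[k] y ∈ E :=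
  ⟨_, π.minimalPeriod_pos y, (iterate_minimalPeriod (f := π)).symm ▸ hy⟩

lemma nextIn_mem (hy : y ∈ E) : nextIn π E y ∈ E := by
  rw [nextIn, dif_pos (exists_pos_iterate_mem hy)]
  exact (Nat.find_spec (exists_pos_iterate_mem hy)).2

lemma nextIn_mem_of_mapsTo {C : Finset (Fin n)} (hC : MapsTo π C C) (hy : y ∈ C) :
    nextIn π E y ∈ C := by
  obtain ⟨k, hk⟩ := exists_nextIn_eq_iterate π E y
  exact hk ▸ hC.iterate k hy

lemma nextIn_inv_nextIn (hy : y ∈ E) : nextIn π⁻¹ E (nextIn π E y) = y := by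
  have h := exists_pos_iterate_mem (π := π) hy
  set m := Nat.find h
  have hm : 0 < m := (Nat.find_spec h).1
  have hy' : (⇑π⁻¹)^[m] ((⇑π)^[m] y) ∈ E := by
    rwa [π.inv_iterate_iterate_of_le y le_rfl, Nat.sub_self]
  have h' : ∃ j, 0 < j ∧ (⇑π⁻¹)^[j] ((⇑π)^[m] y) ∈ E := ⟨m, hm, hy'⟩
  -- walking back from `π^[m] y`, the first element of `E` met is `y`, by minimality of `m`
  have hfind : Nat.find h' = m := by
    refine (Nat.find_eq_iff h').mpr ⟨⟨hm, hy'⟩, fun j hjm ⟨hj, hjE⟩ => ?_⟩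
    rw [π.inv_iterate_iterate_of_le y hjm.le] at hjE
    exact Nat.find_min h (by omega : m - j < m) ⟨by omega, hjE⟩
  have hval : nextIn π E y = (⇑π)^[m] y := dif_pos h
  rw [hval, nextIn, dif_pos h', hfind, π.inv_iterate_iterate_of_le y le_rfl, Nat.sub_self,
    iterate_zero_apply]

end NextIn

lemma mem_level_succ {π : Equiv.Perm (Fin n)} {b r : ℕ} {i : Fin n} :
    i ∈ level π b (r + 1) ↔ i ∈ level π b r ∧
      (∀ k ∈ Finset.Icc 1 b, i < (nextIn π (level π b r))^[k] i) ∧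
      (∀ k ∈ Finset.Icc 1 b, i < (nextIn π⁻¹ (level π b r))^[k] i) := by
  simp only [level, Finset.mem_filter]

lemma succ_mul_card_level_succ_inter_le {π : Equiv.Perm (Fin n)} {C : Finset (Fin n)}
    (hC : MapsTo π C C) (b r : ℕ) :
    (b + 1) * #(level π b (r + 1) ∩ C) ≤ #(level π b r ∩ C) := by
  refine succ_mul_card_le_card_of_lt_iterate (f := nextIn π (level π b r))
    (g := nextIn π⁻¹ (level π b r)) ?_ ?_ ?_ ?_ ?_
  · intro y hy
    rw [Finset.coe_inter, mem_inter_iff] at hy ⊢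
    exact ⟨nextIn_mem hy.1, nextIn_mem_of_mapsTo hC hy.2⟩
  · exact fun y hy => nextIn_inv_nextIn (Finset.mem_inter.mp hy).1
  · exact Finset.inter_subset_inter_right fun i hi => (mem_level_succ.mp hi).1
  · exact fun i hi => (mem_level_succ.mp (Finset.mem_inter.mp hi).1).2.1
  · exact fun i hi => (mem_level_succ.mp (Finset.mem_inter.mp hi).1).2.2

lemma pow_mul_card_level_inter_le {π : Equiv.Perm (Fin n)} {C : Finset (Fin n)}
    (hC : MapsTo π C C) (b r : ℕ) : (b + 1) ^ r * #(level π b r ∩ C) ≤ #C := by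
  induction r with
  | zero => simp [level]
  | succ r ih =>
    calc (b + 1) ^ (r + 1) * #(level π b (r + 1) ∩ C)
        = (b + 1) ^ r * ((b + 1) * #(level π b (r + 1) ∩ C)) := by ring
      _ ≤ (b + 1) ^ r * #(level π b r ∩ C) :=
        Nat.mul_le_mul_left _ (succ_mul_card_level_succ_inter_le hC b r)
      _ ≤ #C := ih

lemma mapsTo_cycleOfF (π : Equiv.Perm (Fin n)) (x : Fin n) :
    MapsTo π (cycleOfF π x) (cycleOfF π x) := by
  intro y hy
  simp only [cycleOfF, Finset.coe_image, Finset.coe_range, mem_image, mem_Iio] at hy ⊢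
  obtain ⟨k, -, rfl⟩ := hy
  refine ⟨(k + 1) % minimalPeriod π x, ?_, ?_⟩
  · exact (Nat.mod_lt _ (π.minimalPeriod_pos x)).trans_le
      (minimalPeriod_le_card.trans_eq (Fintype.card_fin n))
  · rw [iterate_mod_minimalPeriod_eq, iterate_succ_apply']

lemma mul_lt_one_of_succ_pow_le {n b t : ℕ} {ε : ℝ} (ht : t ≠ 0) (hb : (n : ℝ) ^ ε ≤ b)
    (h : (b + 1) ^ t ≤ n) : ε * t < 1 := by
  by_contra! hge
  have hn : (1 : ℝ) ≤ n := by exact_mod_cast (Nat.one_le_pow _ _ b.succ_pos).trans h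
  have : (n : ℝ) < n :=
    calc (n : ℝ) = (n : ℝ) ^ (1 : ℝ) := (Real.rpow_one _).symm
      _ ≤ (n : ℝ) ^ (ε * t) := Real.rpow_le_rpow_of_exponent_le hn hge
      _ = ((n : ℝ) ^ ε) ^ t := Real.rpow_mul_natCast (by positivity) ε t
      _ ≤ (b : ℝ) ^ t := pow_le_pow_left₀ (by positivity) hb t
      _ < ((b : ℝ) + 1) ^ t := pow_lt_pow_left₀ (lt_add_one _) (by positivity) ht
      _ ≤ n := by exact_mod_cast h
  exact this.false

theorem largest_big_level_lt_general (n : ℕ) (ε : ℝ) (hε : 0 < ε) (b : ℕ)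
    (hb : b = ⌈(n : ℝ) ^ ε⌉₊)
    (π : Equiv.Perm (Fin n)) (x : Fin n) (C : Finset (Fin n)) (hC : C = cycleOfF π x)
    (t : ℕ)
    (ht1 : t ≠ 0 → b < ((level π b (t - 1)) ∩ C).card) :
    (t : ℝ) < 1 / ε := by
  rcases Nat.eq_zero_or_pos t with rfl | ht
  · simpa using hε
  have hpow : (b + 1) ^ t ≤ n :=
    calc (b + 1) ^ t = (b + 1) ^ (t - 1) * (b + 1) := by rw [← pow_succ, Nat.sub_add_cancel ht]
      _ ≤ (b + 1) ^ (t - 1) * #(level π b (t - 1) ∩ C) := Nat.mul_le_mul_left _ (ht1 ht.ne')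
      _ ≤ #C := pow_mul_card_level_inter_le (hC ▸ mapsTo_cycleOfF π x) b (t - 1)
      _ ≤ n := C.card_le_univ.trans_eq (Fintype.card_fin n)
  rw [lt_div_iff₀ hε, mul_comm]
  exact mul_lt_one_of_succ_pow_le ht.ne' (hb ▸ Nat.le_ceil _) hpow

/-- Let `ε > 0` and `b = ⌈n^ε⌉`.  For every cycle `C` of `π`, let `t` be the
largest integer `r` with `|E_r ∩ C| > b` (with `t = 0` if `|C| ≤ b`; here `E_r = level π b (r-1)`
since `level` is 0-indexed).  Then `t < 1/ε`. -/
theorem largest_big_level_lt (n : ℕ) (ε : ℝ) (hε : 0 < ε) (b : ℕ)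
    (hb : b = ⌈(n : ℝ) ^ ε⌉₊)
    (π : Equiv.Perm (Fin n)) (x : Fin n) (C : Finset (Fin n)) (hC : C = cycleOfF π x)
    (t : ℕ)
    (ht0 : C.card ≤ b → t = 0)
    (ht1 : t ≠ 0 → b < ((level π b (t - 1)) ∩ C).card)
    (ht2 : ∀ r, t < r → ¬ b < ((level π b (r - 1)) ∩ C).card) :
    (t : ℝ) < 1 / ε :=
  largest_big_level_lt_general n ε hε b hb π x C hC t ht1
end

section
/- Let C be a cycle of π, let r ≥ 1, and let m ∈ E_r ∩ C with |E_r ∩ C| > b. Then m ∈ E_{r+1} (i.e., m < π_r^k(m) for all k ∈ {−b,…,b} \ {0}) if and only if m is the minimum among all elements of C lying on the range π_r^{−b}(m) … m together with the range m … π_r^b(m) along π. -/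
attribute [local instance] Classical.propDecidable

variable {n : ℕ}

/-- `len(u,w) = min{k > 0 : π^k(u) = w}` (0 if `w` is not reachable from `u`). -/
noncomputable def lenTo (π : Equiv.Perm (Fin n)) (u w : Fin n) : ℕ :=
  if h : ∃ k, 0 < k ∧ (⇑π)^[k] u = w then Nat.find h else 0

/-- The range `u … w`: the elements `u, π(u), π²(u), …, w` obtained by following `π` from `u`
to `w` (the whole cycle if `u = w`). -/
noncomputable def rangeTo (π : Equiv.Perm (Fin n)) (u w : Fin n) : Finset (Fin n) :=
  (Finset.range (lenTo π u w + 1)).image fun j => (⇑π)^[j] u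

/-!
The first-return map `π_r` is a permutation of `E_r` (`nextPerm`), and since `E_r` has more than
`b` points on the cycle of `m`, no power `π_r^k` with `0 < |k| ≤ b` fixes `m`. Hence
`m ∈ E_{r+1}` says that `m ≤ π_r^k(m)` for `|k| ≤ b`, i.e. that `m` is at most every `E_r`-point
of the two ranges. This is the claim because every point on the arc of the cycle between
consecutive points `u, w` of `E_r` is at least `min u w`, which is proved by induction on `r`.
The arc between consecutive points `u, w` of `E_{r+1}` is a union of arcs between consecutive
points of `E_r`; let `v` be the smallest `E_r`-point on it. If `v ≠ u, w` then `v ∉ E_{r+1}`, so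
`π_r^k(v) ≤ v` for some `0 < |k| ≤ b`. This point cannot lie on the arc (it would equal `v`, so
`π_r^k` would fix `u`), nor beyond `u` or `w`, which are below all points of their own
`b`-windows.
-/

open Finset Function

noncomputable def hitTime (σ : Equiv.Perm (Fin n)) (E : Finset (Fin n)) (x : Fin n) : ℕ :=
  if h : ∃ k, 0 < k ∧ (⇑σ)^[k] x ∈ E then Nat.find h else 0

theorem exists_apply_le_le_apply_succ {f : ℕ → ℕ} (hf : f 0 = 0) {t j : ℕ} (ht : 0 < t)
    (hj : j ≤ f t) : ∃ i < t, f i ≤ j ∧ j ≤ f (i + 1) := by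
  have hex : ∃ i, j ≤ f (i + 1) := ⟨t - 1, by rwa [Nat.sub_add_cancel ht]⟩
  refine ⟨Nat.find hex, ?_, ?_, Nat.find_spec hex⟩
  · have := Nat.find_min' hex (m := t - 1) (by rwa [Nat.sub_add_cancel ht])
    omega
  · rcases Nat.eq_zero_or_eq_succ_pred (Nat.find hex) with h | h
    · rw [h, hf]; exact j.zero_le
    · rw [h]
      exact (not_le.1 (Nat.find_min hex (h ▸ Nat.pred_lt_self (by omega)))).le

section NextIn

variable {σ : Equiv.Perm (Fin n)} {E : Finset (Fin n)} {x : Fin n}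

theorem exists_iterate_mem (hx : x ∈ E) : ∃ k, 0 < k ∧ (⇑σ)^[k] x ∈ E :=
  ⟨orderOf σ, orderOf_pos σ, by rwa [Equiv.Perm.iterate_eq_pow, pow_orderOf_eq_one]⟩

theorem hitTime_eq_find (hx : x ∈ E) :
    hitTime σ E x = Nat.find (exists_iterate_mem (σ := σ) hx) :=
  dif_pos _

theorem hitTime_pos (hx : x ∈ E) : 0 < hitTime σ E x := by
  rw [hitTime_eq_find hx]; exact (Nat.find_spec (exists_iterate_mem hx)).1

theorem iterate_hitTime_mem (hx : x ∈ E) : (⇑σ)^[hitTime σ E x] x ∈ E := by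
  rw [hitTime_eq_find hx]; exact (Nat.find_spec (exists_iterate_mem hx)).2

theorem hitTime_le (hx : x ∈ E) {j : ℕ} (hj : 0 < j) (hjE : (⇑σ)^[j] x ∈ E) :
    hitTime σ E x ≤ j := by
  rw [hitTime_eq_find hx]; exact Nat.find_min' _ ⟨hj, hjE⟩

theorem iterate_notMem_of_lt_hitTime (hx : x ∈ E) {j : ℕ} (hj : 0 < j)
    (hjt : j < hitTime σ E x) : (⇑σ)^[j] x ∉ E :=
  fun hjE ↦ (hitTime_le hx hj hjE).not_gt hjt

theorem nextIn_eq_iterate_hitTime (hx : x ∈ E) : nextIn σ E x = (⇑σ)^[hitTime σ E x] x := by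
  rw [nextIn, dif_pos (exists_iterate_mem hx), hitTime_eq_find hx]

theorem nextIn_mem_s4 (hx : x ∈ E) : nextIn σ E x ∈ E := by
  rw [nextIn_eq_iterate_hitTime hx]; exact iterate_hitTime_mem hx

theorem nextIn_inv_nextIn_s4 (hx : x ∈ E) : nextIn σ⁻¹ E (nextIn σ E x) = x := by
  set d := hitTime σ E x
  have hy : nextIn σ E x = (⇑σ)^[d] x := nextIn_eq_iterate_hitTime hx
  have hback : ∀ j ≤ d, (⇑σ⁻¹)^[j] (nextIn σ E x) = (⇑σ)^[d - j] x := by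
    intro j hj
    rw [hy, ← Nat.add_sub_cancel' hj, iterate_add_apply, Nat.add_sub_cancel_left]
    exact (Equiv.leftInverse_symm σ).iterate j _
  have hyE := nextIn_mem_s4 (σ := σ) hx
  have hle : hitTime σ⁻¹ E (nextIn σ E x) ≤ d :=
    hitTime_le hyE (hitTime_pos hx) (by rw [hback d le_rfl, Nat.sub_self]; exact hx)
  -- going back fewer than `d` steps would land in `E` strictly between `x` and `nextIn σ E x`
  have heq : hitTime σ⁻¹ E (nextIn σ E x) = d := by
    refine hle.antisymm (not_lt.1 fun hlt ↦ ?_)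
    have hmem := iterate_hitTime_mem (σ := σ⁻¹) hyE
    rw [hback _ hle] at hmem
    have := hitTime_pos (σ := σ⁻¹) hyE
    exact iterate_notMem_of_lt_hitTime hx (by omega) (by omega) hmem
  rw [nextIn_eq_iterate_hitTime hyE, heq, hback d le_rfl, Nat.sub_self, iterate_zero_apply]

end NextIn

noncomputable def nextPerm (σ : Equiv.Perm (Fin n)) (E : Finset (Fin n)) : Equiv.Perm E where
  toFun x := ⟨nextIn σ E x, nextIn_mem_s4 x.2⟩
  invFun x := ⟨nextIn σ⁻¹ E x, nextIn_mem_s4 x.2⟩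
  left_inv x := Subtype.ext (nextIn_inv_nextIn_s4 x.2)
  right_inv x := Subtype.ext <| by simpa using nextIn_inv_nextIn_s4 (σ := σ⁻¹) x.2

section NextPerm

variable {σ : Equiv.Perm (Fin n)} {E : Finset (Fin n)}

@[simp]
theorem coe_nextPerm_apply (x : E) : (nextPerm σ E x : Fin n) = nextIn σ E x := rfl

theorem nextPerm_inv : (nextPerm σ E)⁻¹ = nextPerm σ⁻¹ E := rfl

theorem coe_nextPerm_pow_apply (x : E) (k : ℕ) :
    ((nextPerm σ E ^ k) x : Fin n) = (nextIn σ E)^[k] x := by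
  induction k with
  | zero => rfl
  | succ k ih =>
    rw [pow_succ', Equiv.Perm.mul_apply, coe_nextPerm_apply, ih, iterate_succ_apply']

theorem coe_nextPerm_inv_pow_apply (x : E) (k : ℕ) :
    (((nextPerm σ E)⁻¹ ^ k) x : Fin n) = (nextIn σ⁻¹ E)^[k] x := by
  rw [nextPerm_inv, coe_nextPerm_pow_apply]

end NextPerm

/-- The number of `σ`-steps from `x` to its `i`-th successor in `E`. -/
noncomputable def iterTime (σ : Equiv.Perm (Fin n)) (E : Finset (Fin n)) (x : E) : ℕ → ℕ
  | 0 => 0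
  | i + 1 => iterTime σ E x i + hitTime σ E ((nextPerm σ E ^ i) x)

section IterTime

variable {σ : Equiv.Perm (Fin n)} {E : Finset (Fin n)} (x : E)

theorem coe_nextPerm_pow_eq_iterate_iterTime (i : ℕ) :
    ((nextPerm σ E ^ i) x : Fin n) = (⇑σ)^[iterTime σ E x i] x := by
  induction i with
  | zero => rfl
  | succ i ih =>
    rw [pow_succ', Equiv.Perm.mul_apply, coe_nextPerm_apply,
      nextIn_eq_iterate_hitTime ((nextPerm σ E ^ i) x).2, iterTime, Nat.add_comm,
      iterate_add_apply, ← ih]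

theorem iterTime_strictMono : StrictMono (iterTime σ E x) :=
  strictMono_nat_of_lt_succ fun _ ↦ Nat.lt_add_of_pos_right (hitTime_pos (Subtype.prop _))

theorem exists_iterTime_eq {j : ℕ} (hj : (⇑σ)^[j] x ∈ E) : ∃ i, iterTime σ E x i = j := by
  rcases Nat.eq_zero_or_pos j with rfl | hj0
  · exact ⟨0, rfl⟩
  obtain ⟨i, -, hij, hji⟩ :=
    exists_apply_le_le_apply_succ rfl hj0 (iterTime_strictMono x).le_apply
  rcases hji.eq_or_lt with hji | hji
  · exact ⟨i + 1, hji.symm⟩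
  refine ⟨i, hij.antisymm (not_lt.1 fun hlt ↦ ?_)⟩
  rw [iterTime] at hji
  refine iterate_notMem_of_lt_hitTime (σ := σ) ((nextPerm σ E ^ i) x).2
    (j := j - iterTime σ E x i) (by omega) (by omega) ?_
  rwa [coe_nextPerm_pow_eq_iterate_iterTime, ← iterate_add_apply, Nat.sub_add_cancel hij]

end IterTime

theorem mem_rangeTo {σ : Equiv.Perm (Fin n)} {u w y : Fin n} :
    y ∈ rangeTo σ u w ↔ ∃ j ≤ lenTo σ u w, (⇑σ)^[j] u = y := by
  simp [rangeTo]

section Ranges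

variable {σ : Equiv.Perm (Fin n)} {E : Finset (Fin n)} (x : E) {t : ℕ}

theorem lenTo_nextPerm_pow (ht : 0 < t)
    (hper : ∀ k, 0 < k → k < t → (nextPerm σ E ^ k) x ≠ x) :
    lenTo σ x ((nextPerm σ E ^ t) x) = iterTime σ E x t := by
  have hpos : 0 < iterTime σ E x t := (iterTime_strictMono x) ht
  have hex : ∃ k, 0 < k ∧ (⇑σ)^[k] x = (nextPerm σ E ^ t) x :=
    ⟨_, hpos, (coe_nextPerm_pow_eq_iterate_iterTime x t).symm⟩
  rw [lenTo, dif_pos hex]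
  obtain ⟨hL0, hL⟩ := Nat.find_spec hex
  obtain ⟨i, hi⟩ := exists_iterTime_eq x (hL ▸ ((nextPerm σ E ^ t) x).2)
  have hi0 : 0 < i := Nat.pos_of_ne_zero fun h ↦ hL0.ne (by rw [← hi, h]; rfl)
  have hti : t ≤ i := by
    by_contra! hit
    refine hper (t - i) (by omega) (by omega) ((nextPerm σ E ^ i).injective ?_)
    rw [← Equiv.Perm.mul_apply, ← pow_add, Nat.add_sub_cancel' hit.le]
    exact Subtype.ext (by rw [← hL, ← hi, coe_nextPerm_pow_eq_iterate_iterTime])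
  exact (Nat.find_min' hex ⟨hpos, (coe_nextPerm_pow_eq_iterate_iterTime x t).symm⟩).antisymm
    (hi ▸ (iterTime_strictMono x).monotone hti)

theorem lenTo_nextPerm : lenTo σ x (nextPerm σ E x) = hitTime σ E x := by
  simpa [iterTime] using lenTo_nextPerm_pow x one_pos (by omega)

theorem mem_rangeTo_nextPerm {y : Fin n} (hy : y ∈ rangeTo σ x (nextPerm σ E x)) :
    y = x ∨ y = nextPerm σ E x ∨ y ∉ E := by
  obtain ⟨j, hj, rfl⟩ := mem_rangeTo.1 hy
  rw [lenTo_nextPerm] at hj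
  rcases Nat.eq_zero_or_pos j with rfl | hj0
  · exact .inl rfl
  rcases hj.eq_or_lt with rfl | hjlt
  · exact .inr (.inl (nextIn_eq_iterate_hitTime x.2).symm)
  · exact .inr (.inr (iterate_notMem_of_lt_hitTime x.2 hj0 hjlt))

theorem coe_nextPerm_pow_mem_rangeTo (ht : 0 < t)
    (hper : ∀ k, 0 < k → k < t → (nextPerm σ E ^ k) x ≠ x) {i : ℕ} (hi : i ≤ t) :
    ((nextPerm σ E ^ i) x : Fin n) ∈ rangeTo σ x ((nextPerm σ E ^ t) x) :=
  mem_rangeTo.2 ⟨iterTime σ E x i,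
    lenTo_nextPerm_pow x ht hper ▸ (iterTime_strictMono x).monotone hi,
    (coe_nextPerm_pow_eq_iterate_iterTime x i).symm⟩

theorem exists_mem_rangeTo_nextPerm_of_mem_rangeTo (ht : 0 < t)
    (hper : ∀ k, 0 < k → k < t → (nextPerm σ E ^ k) x ≠ x) {y : Fin n}
    (hy : y ∈ rangeTo σ x ((nextPerm σ E ^ t) x)) :
    ∃ i < t, y ∈ rangeTo σ ((nextPerm σ E ^ i) x) (nextPerm σ E ((nextPerm σ E ^ i) x)) := by
  obtain ⟨j, hj, rfl⟩ := mem_rangeTo.1 hy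
  rw [lenTo_nextPerm_pow x ht hper] at hj
  obtain ⟨i, hit, hij, hji⟩ := exists_apply_le_le_apply_succ rfl ht hj
  refine ⟨i, hit, mem_rangeTo.2 ⟨j - iterTime σ E x i, ?_, ?_⟩⟩
  · rw [lenTo_nextPerm]; rw [iterTime] at hji; omega
  · rw [coe_nextPerm_pow_eq_iterate_iterTime, ← iterate_add_apply, Nat.sub_add_cancel hij]

theorem forall_le_of_mem_rangeTo_iff
    (hseg : ∀ v : E, ∀ y ∈ rangeTo σ v (nextPerm σ E v), min (v : Fin n) (nextPerm σ E v) ≤ y)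
    (ht : 0 < t) (hper : ∀ k, 0 < k → k < t → (nextPerm σ E ^ k) x ≠ x) (c : Fin n) :
    (∀ y ∈ rangeTo σ x ((nextPerm σ E ^ t) x), c ≤ y) ↔
      ∀ i ≤ t, c ≤ (nextPerm σ E ^ i) x := by
  refine ⟨fun h i hi ↦ h _ (coe_nextPerm_pow_mem_rangeTo x ht hper hi), fun h y hy ↦ ?_⟩
  obtain ⟨i, hit, hyi⟩ := exists_mem_rangeTo_nextPerm_of_mem_rangeTo x ht hper hy
  have hsucc := h (i + 1) hit
  rw [pow_succ', Equiv.Perm.mul_apply] at hsucc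
  exact (le_min (h i hit.le) hsucc).trans (hseg _ y hyi)

end Ranges

def IsWindowMin {α : Type*} [LinearOrder α] (g : Equiv.Perm α) (b : ℕ) (x : α) : Prop :=
  ∀ k : ℤ, k ≠ 0 → |k| ≤ b → x < (g ^ k) x

section WindowMin

variable {α : Type*} [LinearOrder α] {g : Equiv.Perm α} {b : ℕ} {x : α}

theorem isWindowMin_iff :
    IsWindowMin g b x ↔ (∀ k ∈ Icc 1 b, x < (g ^ k) x) ∧ ∀ k ∈ Icc 1 b, x < (g⁻¹ ^ k) x := by
  simp only [IsWindowMin, mem_Icc]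
  refine ⟨fun h ↦ ⟨fun k hk ↦ ?_, fun k hk ↦ ?_⟩, fun ⟨hpos, hneg⟩ k hk0 hkb ↦ ?_⟩
  · simpa using h k (by omega) (by rw [abs_of_nonneg (by omega)]; exact_mod_cast hk.2)
  · simpa using
      h (-k) (by omega) (by rw [abs_neg, abs_of_nonneg (by omega)]; exact_mod_cast hk.2)
  · obtain ⟨k, rfl | rfl⟩ := Int.eq_nat_or_neg k <;>
      simp only [abs_neg, Nat.abs_cast, Nat.cast_le] at hkb
    · simpa using hpos k ⟨by omega, hkb⟩
    · simpa using hneg k ⟨by omega, hkb⟩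

theorem isWindowMin_iff_forall_le (hne : ∀ k : ℤ, k ≠ 0 → |k| ≤ b → (g ^ k) x ≠ x) :
    IsWindowMin g b x ↔ (∀ i ≤ b, x ≤ (g ^ i) ((g⁻¹ ^ b) x)) ∧ ∀ i ≤ b, x ≤ (g ^ i) x := by
  have hshift (i : ℕ) : (g ^ i) ((g⁻¹ ^ b) x) = (g ^ ((i : ℤ) - b)) x := by
    rw [sub_eq_add_neg, zpow_add, zpow_neg, zpow_natCast, zpow_natCast, inv_pow,
      Equiv.Perm.mul_apply]
  have hle (h : IsWindowMin g b x) (k : ℤ) (hk : |k| ≤ b) : x ≤ (g ^ k) x := by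
    rcases eq_or_ne k 0 with rfl | hk0
    · simp
    · exact (h k hk0 hk).le
  refine ⟨fun h ↦ ⟨fun i hi ↦ ?_, fun i hi ↦ ?_⟩, fun ⟨hneg, hpos⟩ k hk0 hkb ↦ ?_⟩
  · exact hshift i ▸ hle h _ (abs_le.2 ⟨by omega, by omega⟩)
  · exact_mod_cast hle h i (abs_le.2 ⟨by omega, by omega⟩)
  refine lt_of_le_of_ne ?_ (hne k hk0 hkb).symm
  rw [abs_le] at hkb
  rcases le_or_gt 0 k with hk | hk
  · lift k to ℕ using hk
    exact_mod_cast hpos k (by omega)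
  · have := hneg (k + b).toNat (by omega)
    rwa [hshift, Int.toNat_of_nonneg (by omega), add_sub_cancel_right] at this

theorem min_le_zpow_apply_of_isWindowMin {u : α} {t : ℤ} (hu : IsWindowMin g b u)
    (hw : IsWindowMin g b ((g ^ t) u))
    (hbetween : ∀ i, 0 < i → i < t → ¬ IsWindowMin g b ((g ^ i) u))
    {i : ℤ} (hi0 : 0 ≤ i) (hit : i ≤ t) : min u ((g ^ t) u) ≤ (g ^ i) u := by
  obtain ⟨i₀, hi₀, hmin⟩ :=
    (Icc 0 t).exists_min_image (fun i ↦ (g ^ i) u) ⟨i, mem_Icc.2 ⟨hi0, hit⟩⟩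
  refine le_trans ?_ (hmin i (mem_Icc.2 ⟨hi0, hit⟩))
  rw [mem_Icc] at hi₀
  rcases hi₀.1.eq_or_lt with rfl | hpos
  · exact min_le_left _ _
  rcases hi₀.2.eq_or_lt with rfl | hlt
  · exact min_le_right _ _
  obtain ⟨k, hk0, hkb, hle⟩ : ∃ k : ℤ, k ≠ 0 ∧ |k| ≤ b ∧ (g ^ (k + i₀)) u ≤ (g ^ i₀) u := by
    simpa [IsWindowMin, zpow_add, Equiv.Perm.mul_apply] using hbetween i₀ hpos hlt
  rw [abs_le] at hkb
  by_cases hlow : k + i₀ < 0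
  · exact min_le_of_left_le
      ((hu (k + i₀) (by omega) (abs_le.2 ⟨by omega, by omega⟩)).le.trans hle)
  by_cases hhigh : t < k + i₀
  · refine min_le_of_right_le
      ((hw (k + i₀ - t) (by omega) (abs_le.2 ⟨by omega, by omega⟩)).le.trans ?_)
    rwa [← Equiv.Perm.mul_apply, ← zpow_add, sub_add_cancel]
  · have heq : (g ^ i₀) ((g ^ k) u) = (g ^ i₀) u := by
      rw [← Equiv.Perm.mul_apply, ← zpow_add, add_comm]
      exact hle.antisymm (hmin _ (mem_Icc.2 ⟨by omega, by omega⟩))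
    have := hu k hk0 (abs_le.2 ⟨by omega, by omega⟩)
    rw [(g ^ i₀).injective heq] at this
    exact absurd this (lt_irrefl u)

end WindowMin

theorem exists_nextPerm_eq_pow_of_subset {σ : Equiv.Perm (Fin n)} {E E' : Finset (Fin n)}
    (hE : E' ⊆ E) (u : E') :
    ∃ t, 0 < t ∧ (nextPerm σ E' u : Fin n) = (nextPerm σ E ^ t) ⟨u, hE u.2⟩ ∧
      ∀ i, 0 < i → i < t → ((nextPerm σ E ^ i) ⟨u, hE u.2⟩ : Fin n) ∉ E' := by
  set u' : E := ⟨u, hE u.2⟩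
  have hnext : (nextPerm σ E' u : Fin n) = (⇑σ)^[hitTime σ E' u] u :=
    nextIn_eq_iterate_hitTime u.2
  obtain ⟨t, ht⟩ := exists_iterTime_eq (σ := σ) u' (hnext ▸ hE (nextPerm σ E' u).2)
  have hmono := iterTime_strictMono (σ := σ) u'
  refine ⟨t, Nat.pos_of_ne_zero fun h0 ↦ ?_, ?_, fun i hi0 hit ↦ ?_⟩
  · exact (hitTime_pos (σ := σ) u.2).ne (by rw [← ht, h0]; rfl)
  · rw [hnext, coe_nextPerm_pow_eq_iterate_iterTime, ht]
  · rw [coe_nextPerm_pow_eq_iterate_iterTime]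
    exact iterate_notMem_of_lt_hitTime u.2 ((Nat.zero_le _).trans_lt (hmono hi0))
      (ht ▸ hmono hit)

section Level

variable {π : Equiv.Perm (Fin n)} {b s : ℕ}

theorem level_succ_subset : level π b (s + 1) ⊆ level π b s := fun x hx ↦ by
  simp only [level, mem_filter] at hx
  exact hx.1

theorem mem_level_succ_iff (x : level π b s) :
    (x : Fin n) ∈ level π b (s + 1) ↔ IsWindowMin (nextPerm π (level π b s)) b x := by
  simp only [level, mem_filter, isWindowMin_iff, x.2, true_and, ← Subtype.coe_lt_coe,
    coe_nextPerm_pow_apply, coe_nextPerm_inv_pow_apply]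

end Level

theorem min_le_of_mem_rangeTo_nextPerm_level (π : Equiv.Perm (Fin n)) (b s : ℕ)
    (u : level π b s) {y : Fin n} (hy : y ∈ rangeTo π u (nextPerm π (level π b s) u)) :
    min (u : Fin n) (nextPerm π (level π b s) u) ≤ y := by
  induction s generalizing y with
  | zero =>
    rcases mem_rangeTo_nextPerm u hy with rfl | rfl | hy
    · exact min_le_left _ _
    · exact min_le_right _ _
    · exact absurd (mem_univ y) hy
  | succ s ih =>
    set g := nextPerm π (level π b s)
    set u' : level π b s := ⟨u, level_succ_subset u.2⟩
    obtain ⟨t, ht, hw, hbetween⟩ := exists_nextPerm_eq_pow_of_subset (σ := π) level_succ_subset u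
    have hper (k : ℕ) (hk0 : 0 < k) (hkt : k < t) : (g ^ k) u' ≠ u' :=
      fun h ↦ hbetween k hk0 hkt (h ▸ u.2)
    have hwin_u : IsWindowMin g b u' := (mem_level_succ_iff u').1 u.2
    have hwin_w : IsWindowMin g b ((g ^ (t : ℤ)) u') := by
      rw [zpow_natCast, ← mem_level_succ_iff, ← hw]
      exact (nextPerm π _ u).2
    have hwin_between (i : ℤ) (hi0 : 0 < i) (hit : i < t) : ¬ IsWindowMin g b ((g ^ i) u') := by
      lift i to ℕ using hi0.le
      rw [zpow_natCast, ← mem_level_succ_iff]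
      exact hbetween i (by omega) (by omega)
    rw [hw] at hy ⊢
    refine (forall_le_of_mem_rangeTo_iff u' (fun v y hy ↦ ih v hy) ht hper _).2
      (fun i hi ↦ ?_) y hy
    have hmin := min_le_zpow_apply_of_isWindowMin hwin_u hwin_w hwin_between
      (Nat.cast_nonneg i) (by exact_mod_cast hi)
    simp only [zpow_natCast, min_le_iff] at hmin ⊢
    exact_mod_cast hmin

theorem card_inter_cycleOfF_le_period {σ : Equiv.Perm (Fin n)} {E : Finset (Fin n)} (x : E) :
    #(E ∩ cycleOfF σ x) ≤ MulAction.period (nextPerm σ E) x := by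
  set p := MulAction.period (nextPerm σ E) x
  have hp : 0 < p := MulAction.period_pos_of_orderOf_pos (orderOf_pos _) x
  calc #(E ∩ cycleOfF σ x)
      ≤ #((range p).image fun i ↦ ((nextPerm σ E ^ i) x : Fin n)) := by
        refine card_le_card fun e he ↦ ?_
        obtain ⟨heE, he⟩ := mem_inter.1 he
        obtain ⟨j, -, rfl⟩ := mem_image.1 he
        obtain ⟨i, rfl⟩ := exists_iterTime_eq x heE
        refine mem_image.2 ⟨i % p, mem_range.2 (Nat.mod_lt _ hp), ?_⟩
        rw [← coe_nextPerm_pow_eq_iterate_iterTime, ← Equiv.Perm.smul_def,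
          MulAction.pow_mod_period_smul, Equiv.Perm.smul_def]
    _ ≤ #(range p) := card_image_le
    _ = p := card_range p

theorem nextPerm_zpow_apply_ne_self {σ : Equiv.Perm (Fin n)} {E : Finset (Fin n)} {x : E}
    {b : ℕ} (hcard : b < #(E ∩ cycleOfF σ x)) {k : ℤ} (hk0 : k ≠ 0) (hkb : |k| ≤ b) :
    (nextPerm σ E ^ k) x ≠ x := by
  intro h
  have hdvd := MulAction.zpow_smul_eq_iff_period_dvd.1 (by rwa [Equiv.Perm.smul_def])
  have := Int.le_of_dvd (abs_pos.2 hk0) ((dvd_abs _ _).2 hdvd)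
  have := card_inter_cycleOfF_le_period (σ := σ) x
  omega

/-- Let `C` be a cycle of `π`, `r ≥ 1`, and `m ∈ E_r ∩ C` with
`|E_r ∩ C| > b` (here `E_r = level π b s` with `s = r - 1`, `π_r = nextIn π (level π b s)`).
Then `m ∈ E_{r+1}` if and only if `m` is the minimum among all elements lying on the range
`π_r^{−b}(m) … m` together with the range `m … π_r^b(m)` along `π`. -/
theorem mem_next_level_iff_min_range (n b : ℕ) (hb : 1 ≤ b) (π : Equiv.Perm (Fin n))
    (m : Fin n) (C : Finset (Fin n)) (hC : C = cycleOfF π m)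
    (s : ℕ) (hm : m ∈ level π b s) (hcard : b < ((level π b s) ∩ C).card) :
    m ∈ level π b (s + 1) ↔
      ∀ y ∈ rangeTo π (stepB π⁻¹ b (level π b s) m) m ∪
          rangeTo π m (stepB π b (level π b s) m),
        m ≤ y := by
  subst hC
  have hseg := min_le_of_mem_rangeTo_nextPerm_level π b s
  set g := nextPerm π (level π b s)
  obtain ⟨m', rfl⟩ : ∃ m' : level π b s, (m' : Fin n) = m := ⟨⟨m, hm⟩, rfl⟩
  have hne (k : ℤ) : k ≠ 0 → |k| ≤ b → (g ^ k) m' ≠ m' := nextPerm_zpow_apply_ne_self hcard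
  have hper (k : ℕ) (hk0 : 0 < k) (hkb : k < b) : (g ^ k) m' ≠ m' := by
    simpa using hne k (by omega) (by simp; omega)
  have hper' (k : ℕ) (hk0 : 0 < k) (hkb : k < b) : (g ^ k) ((g⁻¹ ^ b) m') ≠ (g⁻¹ ^ b) m' := by
    rw [← Equiv.Perm.mul_apply, ((Commute.refl g).inv_right.pow_pow k b).eq,
      Equiv.Perm.mul_apply]
    exact fun h ↦ hper k hk0 hkb ((g⁻¹ ^ b).injective h)
  have hback := forall_le_of_mem_rangeTo_iff ((g⁻¹ ^ b) m') hseg hb hper' m'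
  rw [inv_pow, ← Equiv.Perm.mul_apply, mul_inv_cancel, Equiv.Perm.one_apply, ← inv_pow] at hback
  rw [mem_level_succ_iff m', isWindowMin_iff_forall_le hne, forall_mem_union, stepB, stepB,
    ← coe_nextPerm_inv_pow_apply m', ← coe_nextPerm_pow_apply m', hback,
    forall_le_of_mem_rangeTo_iff m' hseg hb hper]
  rfl
end
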